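/- arXiv:2409.04715 — 3 statements merged into one kernel-verified Lean document; each statement's English description precedes it below -/
import Mathlib

section
/- Let φ: L(t) → L(t') be a cluster morphism between seeds t = ({x_i}_{i∈I}, I_uf, B) and t' = ({y_j}_{j∈I'}, I'_uf, B'), with F = {i ∈ I : φ(x_i) = 1}, and let A_φ denote the cluster algebra with initial seed ({x_i}_{i∈I∖F}, I_uf∖F, B restricted to (I∖F) × (I_uf∖F)). Then φ maps every cluster monomial of A_φ to a cluster monomial of the cluster algebra A_{t'}. -/
open scoped BigOperators

noncomputable section

/-- The Laurent polynomial ring `ℚ[x_i^{±1} : i ∈ I]`, realized as the group algebra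
over `ℚ` of the free abelian group `I →₀ ℤ`. -/
abbrev LaurentRing (I : Type*) : Type _ := AddMonoidAlgebra ℚ (I →₀ ℤ)

instance (I : Type*) : IsDomain (LaurentRing I) := NoZeroDivisors.to_isDomain _

/-- The Laurent variable `x_i`. -/
def Xv {I : Type*} (i : I) : LaurentRing I :=
  AddMonoidAlgebra.single (Finsupp.single i 1) 1

/-- The inverse Laurent variable `x_i⁻¹`. -/
def Xinv {I : Type*} (i : I) : LaurentRing I :=
  AddMonoidAlgebra.single (Finsupp.single i (-1)) 1

/-- A seed on the vertex set `I`: a set `uf` of unfrozen vertices together with an integer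
exchange matrix `B` (rows indexed by `I`, columns meaningful only for `j ∈ uf`) whose
principal part is skew-symmetric.  The cluster variables of the seed are the standard
generators `Xv i` of the Laurent polynomial ring `LaurentRing I`. -/
structure Seed (I : Type*) where
  uf : Set I
  B : I → I → ℤ
  skew : ∀ i ∈ uf, ∀ j ∈ uf, B i j = - B j i

open Classical in
/-- Mutation of the exchange matrix at the vertex `k`:
`(μ_k B)_{ij} = -b_{ij}` if `i = k` or `j = k`, and
`(μ_k B)_{ij} = b_{ij} + sgn(b_{ik}) * max (b_{ik} b_{kj}) 0` otherwise. -/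
def mutB {I : Type*} (B : I → I → ℤ) (k : I) : I → I → ℤ := fun i j =>
  if i = k ∨ j = k then - B i j
  else B i j + (B i k).sign * max (B i k * B k j) 0

/-- The one-step mutated cluster variable `μ_k(x)_k`, as an element of the Laurent ring:
`(∏_{j : b_{jk} > 0} x_j^{b_{jk}} + ∏_{j : b_{jk} < 0} x_j^{-b_{jk}}) / x_k`. -/
def exchVar {I : Type*} (B : I → I → ℤ) (k : I) : LaurentRing I :=
  ((∏ᶠ j : I, Xv j ^ (max (B j k) 0).toNat) +
    (∏ᶠ j : I, Xv j ^ (max (-(B j k)) 0).toNat)) * Xinv k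

/-- A cluster morphism from the seed `t` to the seed `t'`: a ring homomorphism `hom`
between the Laurent polynomial rings sending each cluster variable `x_i` either to `1`
(the set of such `i` being `F`) or to a cluster variable `y_{vmap i}`, such that the induced
vertex map is injective on `I ∖ F`, maps unfrozen vertices off `F` to unfrozen vertices,
intertwines the one-step mutated variables there, and satisfies the sign condition
`b_{ij} * b'_{vmap i, vmap j} ≥ 0` on unfrozen vertices off `F`. -/
structure ClusterMorphism {I I' : Type*} (t : Seed I) (t' : Seed I') where
  hom : LaurentRing I →+* LaurentRing I'
  vmap : I → I'
  hx : ∀ i : I, hom (Xv i) = 1 ∨ hom (Xv i) = Xv (vmap i)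
  vinj : ∀ i i' : I, hom (Xv i) ≠ 1 → hom (Xv i') ≠ 1 → vmap i = vmap i' → i = i'
  huf : ∀ i ∈ t.uf, hom (Xv i) ≠ 1 → vmap i ∈ t'.uf
  hmut : ∀ i ∈ t.uf, hom (Xv i) ≠ 1 → hom (exchVar t.B i) = exchVar t'.B (vmap i)
  hsign : ∀ i ∈ t.uf, ∀ j ∈ t.uf, hom (Xv i) ≠ 1 → hom (Xv j) ≠ 1 →
    0 ≤ t.B i j * t'.B (vmap i) (vmap j)

/-- The fraction field of the Laurent polynomial ring, where iterated mutated cluster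
variables live. -/
abbrev LField (I : Type*) : Type _ := FractionRing (LaurentRing I)

open Classical in
/-- Mutation of a cluster at the vertex `k`, inside an ambient field:
`μ_k(x)_k = (∏_{j : b_{jk} > 0} x_j^{b_{jk}} + ∏_{j : b_{jk} < 0} x_j^{-b_{jk}}) / x_k`
and `μ_k(x)_i = x_i` for `i ≠ k`. -/
def mutX {I K : Type*} [Field K] (B : I → I → ℤ) (k : I) (x : I → K) : I → K := fun i =>
  if i = k then
    ((∏ᶠ j : I, x j ^ max (B j k) 0) + (∏ᶠ j : I, x j ^ max (-(B j k)) 0)) / x k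
  else x i

/-- Iterated mutation of a pair (exchange matrix, cluster) along a list of vertices;
the head of the list is mutated first. -/
def mutSeq {I K : Type*} [Field K] (l : List I) (p : (I → I → ℤ) × (I → K)) :
    (I → I → ℤ) × (I → K) :=
  l.foldl (fun q k => (mutB q.1 k, mutX q.1 k q.2)) p

/-- The initial cluster of a seed pattern, viewed inside the fraction field. -/
def xGen (I : Type*) : I → LField I := fun i => algebraMap (LaurentRing I) (LField I) (Xv i)

/-- `z` is a cluster variable of the mutation pattern with initial data `(uf, B₀, x₀)`:
it occurs in the cluster of a seed obtained from the initial one by a finite sequence of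
mutations at unfrozen vertices. -/
def IsClusterVariable {J K : Type*} [Field K] (uf : Set J) (B₀ : J → J → ℤ) (x₀ : J → K)
    (z : K) : Prop :=
  ∃ l : List J, (∀ k ∈ l, k ∈ uf) ∧ ∃ j : J, z = (mutSeq l (B₀, x₀)).2 j

/-- `m` is a cluster monomial of the mutation pattern with initial data `(uf, B₀, x₀)`:
a product of cluster variables all belonging to a single seed obtained from the initial one
by a finite sequence of mutations at unfrozen vertices. -/
def IsClusterMonomial {J K : Type*} [Field K] (uf : Set J) (B₀ : J → J → ℤ) (x₀ : J → K)
    (m : K) : Prop :=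
  ∃ l : List J, (∀ k ∈ l, k ∈ uf) ∧
    ∃ a : J → ℕ, m = ∏ᶠ j : J, (mutSeq l (B₀, x₀)).2 j ^ a j

/-- The cluster algebra of the pattern with initial data `(uf, B₀, x₀)`: the `ℚ`-subalgebra
of the ambient field generated by all cluster variables. -/
def clusterAlgebra {J K : Type*} [Field K] [Algebra ℚ K] (uf : Set J) (B₀ : J → J → ℤ)
    (x₀ : J → K) : Subalgebra ℚ K :=
  Algebra.adjoin ℚ {z | IsClusterVariable uf B₀ x₀ z}


/-!
Off `F` the morphism is an injective relabelling `e : I ∖ F → I'` of vertices. Comparing the two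
monomials of the exchange binomials at an unfrozen `i ∉ F` shows that column `e i` of `B'` is
column `i` of `B` pushed forward along `e`, possibly negated, and negated only when that column
vanishes on unfrozen rows. This compatibility survives mutation at `k` on one side and at `e k` on
the other, and under it the exchange relation at `e k` is the image of the one at `k`; so along any
mutation sequence `φ` sends every cluster variable of `A_φ` to the cluster variable at the
corresponding vertex of `A_{t'}`. To make sense of `φ` on the fraction field, cluster variables are
carried as fractions whose numerator and denominator become positive under `φ` followed by
evaluation at `x = 1`; being subtraction-free, the exchange relation preserves this, so no
denominator is ever sent to zero.
-/

open Function Set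

section ExchangeMatrix

variable {J I' : Type*}

lemma sign_mul_max_mul_comm (a b : ℤ) : a.sign * max (a * b) 0 = b.sign * max (a * b) 0 := by
  rcases lt_trichotomy (a * b) 0 with h | h | h
  · simp [max_eq_right h.le]
  · simp [h]
  · rcases pos_and_pos_or_neg_and_neg_of_mul_pos h with ⟨ha, hb⟩ | ⟨ha, hb⟩
    · rw [Int.sign_eq_one_of_pos ha, Int.sign_eq_one_of_pos hb]
    · rw [Int.sign_eq_neg_one_of_neg ha, Int.sign_eq_neg_one_of_neg hb]

lemma sign_mul_max_mul_of_eq_one_or_neg_one {ε : ℤ} (hε : ε = 1 ∨ ε = -1) (a b : ℤ) :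
    (ε * a).sign * max (ε * a * (ε * b)) 0 = ε * (a.sign * max (a * b) 0) := by
  rcases hε with rfl | rfl <;> simp

lemma mutB_apply_left (B : J → J → ℤ) (k j : J) : mutB B k k j = -B k j := by
  simp [mutB]

lemma mutB_apply_right (B : J → J → ℤ) (i k : J) : mutB B k i k = -B i k := by
  simp [mutB]

lemma mutB_apply_of_ne (B : J → J → ℤ) {k i j : J} (hi : i ≠ k) (hj : j ≠ k) :
    mutB B k i j = B i j + (B i k).sign * max (B i k * B k j) 0 := by
  simp [mutB, hi, hj]

lemma mutB_apply_eq_zero {B : J → J → ℤ} {k i j : J} (hki : B k i = 0) (hji : B j i = 0) :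
    mutB B k j i = 0 := by
  by_cases hj : j = k
  · subst hj; simp [mutB_apply_left, hki]
  by_cases hi : i = k
  · subst hi; simp [mutB_apply_right, hji]
  simp [mutB_apply_of_ne B hj hi, hki, hji]

lemma mutB_skew {uf : Set J} {B : J → J → ℤ} (hB : ∀ i ∈ uf, ∀ j ∈ uf, B i j = -B j i)
    {k : J} (hk : k ∈ uf) : ∀ i ∈ uf, ∀ j ∈ uf, mutB B k i j = -mutB B k j i := by
  intro i hi j hj
  by_cases hik : i = k
  · subst hik; rw [mutB_apply_left, mutB_apply_right, hB i hi j hj]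
  by_cases hjk : j = k
  · subst hjk; rw [mutB_apply_left, mutB_apply_right, hB i hi j hj]
  rw [mutB_apply_of_ne B hik hjk, mutB_apply_of_ne B hjk hik, hB i hi j hj, hB j hj k hk,
    hB k hk i hi, Int.sign_neg, neg_mul_neg, mul_comm (B k j), sign_mul_max_mul_comm (B i k)]
  ring

structure ColumnMatch (e : J → I') (C : J → J → ℤ) (C' : I' → I' → ℤ) (ε : ℤ) (i : J) :
    Prop where
  apply_image : ∀ j, C' (e j) (e i) = ε * C j i
  apply_of_notMem_range : ∀ j' ∉ range e, C' j' (e i) = 0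

variable {e : J → I'} {C : J → J → ℤ} {C' : I' → I' → ℤ}

lemma ColumnMatch.mutB (he : Injective e) {ε δ : ℤ} {i k : J} (hε : ε = 1 ∨ ε = -1)
    (hi : ColumnMatch e C C' ε i) (hk : ColumnMatch e C C' δ k) (hεδ : ε = δ ∨ C k i = 0) :
    ColumnMatch e (_root_.mutB C k) (_root_.mutB C' (e k)) ε i where
  apply_image j := by
    by_cases hj : j = k
    · subst hj; rw [mutB_apply_left, mutB_apply_left, hi.apply_image]; ring
    by_cases hik : i = k
    · subst hik; rw [mutB_apply_right, mutB_apply_right, hi.apply_image]; ring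
    rw [mutB_apply_of_ne _ (he.ne hj) (he.ne hik), mutB_apply_of_ne _ hj hik, hi.apply_image,
      hk.apply_image, hi.apply_image]
    rcases hεδ with rfl | hki
    · rw [sign_mul_max_mul_of_eq_one_or_neg_one hε]; ring
    · simp [hki]
  apply_of_notMem_range j' hj' := by
    by_cases hik : i = k
    · subst hik; rw [mutB_apply_right, hi.apply_of_notMem_range j' hj', neg_zero]
    have hj'k : j' ≠ e k := fun h => hj' ⟨k, h.symm⟩
    rw [mutB_apply_of_ne _ hj'k (he.ne hik), hi.apply_of_notMem_range j' hj',
      hk.apply_of_notMem_range j' hj']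
    simp

structure MatrixCompatible (uf : Set J) (e : J → I') (C : J → J → ℤ) (C' : I' → I' → ℤ) :
    Prop where
  skew : ∀ i ∈ uf, ∀ j ∈ uf, C i j = -C j i
  column : ∀ i ∈ uf,
    ColumnMatch e C C' 1 i ∨ (ColumnMatch e C C' (-1) i ∧ ∀ j ∈ uf, C j i = 0)

variable {uf : Set J}

lemma MatrixCompatible.exists_columnMatch (h : MatrixCompatible uf e C C') {i : J} (hi : i ∈ uf) :
    ∃ ε, (ε = 1 ∨ ε = -1) ∧ ColumnMatch e C C' ε i := by
  rcases h.column i hi with h1 | ⟨h1, -⟩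
  exacts [⟨1, Or.inl rfl, h1⟩, ⟨-1, Or.inr rfl, h1⟩]

lemma MatrixCompatible.mutB (he : Injective e) (h : MatrixCompatible uf e C C') {k : J}
    (hk : k ∈ uf) : MatrixCompatible uf e (_root_.mutB C k) (_root_.mutB C' (e k)) where
  skew := mutB_skew h.skew hk
  column i hi := by
    rcases h.column i hi with hi1 | ⟨hi1, hvan⟩
    · rcases h.column k hk with hk1 | ⟨hk1, hkvan⟩
      · exact Or.inl (hi1.mutB he (Or.inl rfl) hk1 (Or.inl rfl))
      · refine Or.inl (hi1.mutB he (Or.inl rfl) hk1 (Or.inr ?_))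
        rw [h.skew k hk i hi, hkvan i hi, neg_zero]
    · obtain ⟨δ, -, hkδ⟩ := h.exists_columnMatch hk
      exact Or.inr ⟨hi1.mutB he (Or.inr rfl) hkδ (Or.inr (hvan k hk)),
        fun j hj => mutB_apply_eq_zero (hvan k hk) (hvan j hj)⟩

end ExchangeMatrix

lemma algebraMap_ne_zero_of_map_pos {S 𝕜 : Type*} [CommRing S] [Semiring 𝕜] [Preorder 𝕜]
    (w : S →+* 𝕜) {x : S} (hx : 0 < w x) : algebraMap S (FractionRing S) x ≠ 0 :=
  (map_ne_zero_iff _ (IsFractionRing.injective S (FractionRing S))).2 (ne_zero_of_map hx.ne')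

section FracImage

variable {R S 𝕜 : Type*} [CommRing R] [IsDomain R] [CommRing S] [IsDomain S]
  [CommSemiring 𝕜] [PartialOrder 𝕜] [IsStrictOrderedRing 𝕜] (f : R →+* S) (w : S →+* 𝕜)

/-- `v` is the image of `u` under the partial extension of `f` to fraction fields, witnessed by a
fraction whose numerator and denominator stay `w`-positive under `f`. -/
def FracImage (u : FractionRing R) (v : FractionRing S) : Prop :=
  ∃ a s : R, 0 < w (f a) ∧ 0 < w (f s) ∧
    u = algebraMap R _ a / algebraMap R _ s ∧ v = algebraMap S _ (f a) / algebraMap S _ (f s)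

variable {f w}

lemma FracImage.one : FracImage f w 1 1 :=
  ⟨1, 1, by simp, by simp, by simp, by simp⟩

lemma FracImage.mul {u u' v v'} (h : FracImage f w u v) (h' : FracImage f w u' v') :
    FracImage f w (u * u') (v * v') := by
  obtain ⟨a, s, ha, hs, rfl, rfl⟩ := h
  obtain ⟨a', s', ha', hs', rfl, rfl⟩ := h'
  refine ⟨a * a', s * s', by simpa using mul_pos ha ha', by simpa using mul_pos hs hs', ?_, ?_⟩
    <;> simp only [map_mul, div_mul_div_comm]

lemma FracImage.add {u u' v v'} (h : FracImage f w u v) (h' : FracImage f w u' v') :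
    FracImage f w (u + u') (v + v') := by
  obtain ⟨a, s, ha, hs, rfl, rfl⟩ := h
  obtain ⟨a', s', ha', hs', rfl, rfl⟩ := h'
  refine ⟨a * s' + s * a', s * s', ?_, by simpa using mul_pos hs hs', ?_, ?_⟩
  · simpa using add_pos (mul_pos ha hs') (mul_pos hs ha')
  · rw [div_add_div _ _ (algebraMap_ne_zero_of_map_pos (w.comp f) hs)
      (algebraMap_ne_zero_of_map_pos (w.comp f) hs')]
    simp only [map_add, map_mul]
  · rw [div_add_div _ _ (algebraMap_ne_zero_of_map_pos w hs)
      (algebraMap_ne_zero_of_map_pos w hs')]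
    simp only [map_add, map_mul]

lemma FracImage.div {u u' v v'} (h : FracImage f w u v) (h' : FracImage f w u' v') :
    FracImage f w (u / u') (v / v') := by
  obtain ⟨a, s, ha, hs, rfl, rfl⟩ := h
  obtain ⟨a', s', ha', hs', rfl, rfl⟩ := h'
  refine ⟨a * s', s * a', by simpa using mul_pos ha hs', by simpa using mul_pos hs ha', ?_, ?_⟩
    <;> simp only [map_mul, div_div_div_eq]

lemma FracImage.pow {u v} (h : FracImage f w u v) (n : ℕ) : FracImage f w (u ^ n) (v ^ n) := by
  induction n with
  | zero => simpa using FracImage.one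
  | succ n ih => simpa only [pow_succ] using ih.mul h

lemma FracImage.zpow {u v} (h : FracImage f w u v) {n : ℤ} (hn : 0 ≤ n) :
    FracImage f w (u ^ n) (v ^ n) := by
  lift n to ℕ using hn
  simpa only [zpow_natCast] using h.pow n

lemma FracImage.finprod {ι : Type*} [Finite ι] {u : ι → FractionRing R} {v : ι → FractionRing S}
    (h : ∀ i, FracImage f w (u i) (v i)) : FracImage f w (∏ᶠ i, u i) (∏ᶠ i, v i) := by
  cases nonempty_fintype ι
  simpa only [finprod_eq_prod_of_fintype, Prod.fst_prod, Prod.snd_prod] using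
    Finset.prod_induction (fun i => (u i, v i)) (fun p => FracImage f w p.1 p.2)
      (fun _ _ => FracImage.mul) FracImage.one (fun i _ => h i)

lemma FracImage.mutX {J : Type*} [Finite J] {u : J → FractionRing R} {v : J → FractionRing S}
    (h : ∀ j, FracImage f w (u j) (v j)) (C : J → J → ℤ) (k j : J) :
    FracImage f w (mutX C k u j) (mutX C k v j) := by
  by_cases hj : j = k
  · subst hj
    simp only [_root_.mutX, if_pos]
    exact ((FracImage.finprod fun i => (h i).zpow (le_max_right _ _)).add
      (FracImage.finprod fun i => (h i).zpow (le_max_right _ _))).div (h j)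
  · simpa [_root_.mutX, hj] using h j

end FracImage

section SeedCompatible

variable {J I' : Type*} {e : J → I'}

lemma finprod_comp_of_injective {M : Type*} [CommMonoid M] (he : Injective e) {g : I' → M}
    (hg : ∀ j' ∉ range e, g j' = 1) : ∏ᶠ j, g (e j) = ∏ᶠ j', g j' := by
  rw [← finprod_mem_range he, ← finprod_mem_univ g]
  exact finprod_mem_inter_mulSupport_eq' _ _ _ fun j' hj' =>
    iff_of_true (not_imp_comm.1 (hg j') hj') trivial

lemma finprod_pow_extend {M : Type*} [CommMonoid M] (he : Injective e) (y : I' → M) (n : J → ℕ) :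
    ∏ᶠ j', y j' ^ extend e n 0 j' = ∏ᶠ j, y (e j) ^ n j := by
  rw [← finprod_comp_of_injective he fun j' hj' => by
    rw [extend_apply' _ _ _ hj', Pi.zero_apply, pow_zero]]
  simp only [he.extend_apply]

variable {C : J → J → ℤ} {C' : I' → I' → ℤ}

lemma ColumnMatch.finprod_zpow {K : Type*} [DivisionCommMonoid K] (he : Injective e)
    {ε : ℤ} {k : J} (hk : ColumnMatch e C C' ε k) (y : I' → K) {g : ℤ → ℤ} (hg : g 0 = 0) :
    ∏ᶠ j', y j' ^ g (C' j' (e k)) = ∏ᶠ j, y (e j) ^ g (ε * C j k) := by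
  rw [← finprod_comp_of_injective he fun j' hj' => by
    rw [hk.apply_of_notMem_range j' hj', hg, zpow_zero]]
  simp only [hk.apply_image]

lemma ColumnMatch.mutX_comp {K : Type*} [Field K] (he : Injective e) {ε : ℤ}
    (hε : ε = 1 ∨ ε = -1) {k : J} (hk : ColumnMatch e C C' ε k) (y : I' → K) (j : J) :
    mutX C' (e k) y (e j) = mutX C k (y ∘ e) j := by
  by_cases hj : j = k
  · subst hj
    simp only [mutX, if_pos, comp_apply]
    rw [hk.finprod_zpow he y (g := fun x => max x 0) (by simp),
      hk.finprod_zpow he y (g := fun x => max (-x) 0) (by simp)]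
    rcases hε with rfl | rfl
    · simp
    · simp [add_comm]
  · simp [mutX, hj, he.ne hj]

variable {R S 𝕜 : Type*} [CommRing R] [IsDomain R] [CommRing S] [IsDomain S]
  [CommSemiring 𝕜] [PartialOrder 𝕜] [IsStrictOrderedRing 𝕜] (f : R →+* S) (w : S →+* 𝕜)

structure SeedCompatible (uf : Set J) (e : J → I') (p : (J → J → ℤ) × (J → FractionRing R))
    (q : (I' → I' → ℤ) × (I' → FractionRing S)) : Prop where
  matrix : MatrixCompatible uf e p.1 q.1
  var : ∀ j, FracImage f w (p.2 j) (q.2 (e j))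

variable {f w} {uf : Set J} [Finite J]

lemma SeedCompatible.mutate (he : Injective e) {p q} (h : SeedCompatible f w uf e p q) {k : J}
    (hk : k ∈ uf) :
    SeedCompatible f w uf e (mutB p.1 k, mutX p.1 k p.2) (mutB q.1 (e k), mutX q.1 (e k) q.2) where
  matrix := h.matrix.mutB he hk
  var j := by
    obtain ⟨ε, hε, hkε⟩ := h.matrix.exists_columnMatch hk
    show FracImage f w (mutX p.1 k p.2 j) (mutX q.1 (e k) q.2 (e j))
    rw [hkε.mutX_comp he hε]
    exact FracImage.mutX h.var p.1 k j

lemma SeedCompatible.mutSeq (he : Injective e) {p q} (h : SeedCompatible f w uf e p q)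
    {l : List J} (hl : ∀ k ∈ l, k ∈ uf) :
    SeedCompatible f w uf e (_root_.mutSeq l p) (_root_.mutSeq (l.map e) q) := by
  induction l generalizing p q with
  | nil => exact h
  | cons k l ih =>
    exact ih (h.mutate he (hl k List.mem_cons_self)) fun k' hk' =>
      hl k' (List.mem_cons_of_mem k hk')

end SeedCompatible

section Laurent

variable {I : Type*}

lemma Xv_mul_Xinv (i : I) : Xv i * Xinv i = 1 := by
  simp [Xv, Xinv, AddMonoidAlgebra.single_mul_single, AddMonoidAlgebra.one_def]

lemma finprod_Xv_pow [Fintype I] (n : I → ℕ) :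
    ∏ᶠ i, Xv i ^ n i = AddMonoidAlgebra.single (∑ i, Finsupp.single i (n i : ℤ)) 1 := by
  simp [finprod_eq_prod_of_fintype, Xv, AddMonoidAlgebra.single_pow]

lemma finprod_Xv_pow_add_finprod_Xv_pow_eq [Finite I] {n m n' m' : I → ℕ}
    (h : ∏ᶠ i, Xv i ^ n i + ∏ᶠ i, Xv i ^ m i = ∏ᶠ i, Xv i ^ n' i + ∏ᶠ i, Xv i ^ m' i) :
    n = n' ∧ m = m' ∨ n = m' ∧ m = n' := by
  cases nonempty_fintype I
  have hinj : Injective fun n : I → ℕ => ∑ i, Finsupp.single i (n i : ℤ) := fun n n' h => by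
    have h' := congrArg (⇑) h
    simp only [Finsupp.coe_univ_sum_single] at h'
    exact funext fun i => by exact_mod_cast congrFun h' i
  simp only [finprod_Xv_pow] at h
  rw [AddMonoidAlgebra.single_add_single_inj one_ne_zero one_ne_zero] at h
  rcases h with ⟨h1, h2⟩ | ⟨-, h1, h2⟩ | ⟨h, -⟩
  · exact Or.inl ⟨hinj h1, hinj h2⟩
  · exact Or.inr ⟨hinj h1, hinj h2⟩
  · norm_num at h

def evalOne (I : Type*) : LaurentRing I →+* ℚ :=
  (AddMonoidAlgebra.lift ℚ ℚ (I →₀ ℤ) 1).toRingHom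

lemma evalOne_Xv (i : I) : evalOne I (Xv i) = 1 := by
  simp [evalOne, Xv]

end Laurent

lemma eq_of_extend_toNat_eq {J I' : Type*} {e : J → I'} (he : Injective e) {a : J → ℤ}
    {b : I' → ℤ}
    (hpos : extend e (fun j => (max (a j) 0).toNat) 0 = fun j' => (max (b j') 0).toNat)
    (hneg : extend e (fun j => (max (-a j) 0).toNat) 0 = fun j' => (max (-b j') 0).toNat) :
    (∀ j, b (e j) = a j) ∧ ∀ j' ∉ range e, b j' = 0 := by
  constructor
  · intro j
    have h1 := congrFun hpos (e j)
    have h2 := congrFun hneg (e j)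
    simp only [he.extend_apply] at h1 h2
    omega
  · intro j' hj'
    have h1 := congrFun hpos j'
    have h2 := congrFun hneg j'
    simp only [extend_apply' _ _ _ hj', Pi.zero_apply] at h1 h2
    omega

namespace ClusterMorphism

variable {I I' : Type*} {t : Seed I} {t' : Seed I'} (c : ClusterMorphism t t')

/-- The vertex set `I ∖ F` of the restricted seed. -/
abbrev Support : Type _ := {i : I // c.hom (Xv i) ≠ 1}

abbrev supportMap (j : c.Support) : I' := c.vmap j

lemma supportMap_injective : Injective c.supportMap := fun j j' h =>
  Subtype.ext (c.vinj _ _ j.2 j'.2 h)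

lemma hom_Xv (j : c.Support) : c.hom (Xv j) = Xv (c.supportMap j) :=
  (c.hx j).resolve_left j.2

lemma hom_Xinv (j : c.Support) : c.hom (Xinv j) = Xinv (c.supportMap j) := by
  refine left_inv_eq_right_inv (a := Xv (c.supportMap j)) ?_ (Xv_mul_Xinv _)
  rw [← c.hom_Xv, ← map_mul, mul_comm, Xv_mul_Xinv, map_one]

lemma hom_finprod_Xv_pow [Finite I] (n : I → ℕ) :
    c.hom (∏ᶠ i, Xv i ^ n i) = ∏ᶠ i', Xv i' ^ extend c.supportMap (fun j => n j) 0 i' := by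
  have hF : ∀ i ∉ range ((↑) : c.Support → I), c.hom (Xv i ^ n i) = 1 := fun i hi => by
    rw [map_pow, not_not.1 fun h => hi ⟨⟨i, h⟩, rfl⟩, one_pow]
  rw [map_finprod _ (Set.toFinite _), ← finprod_comp_of_injective Subtype.val_injective hF,
    finprod_pow_extend c.supportMap_injective]
  simp only [map_pow, c.hom_Xv]

lemma column_compatible [Finite I] [Finite I'] {i : c.Support} (hi : (i : I) ∈ t.uf) :
    ColumnMatch c.supportMap (fun i j => t.B i j) t'.B 1 i ∨
      (ColumnMatch c.supportMap (fun i j => t.B i j) t'.B (-1) i ∧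
        ∀ j : c.Support, (j : I) ∈ t.uf → t.B j i = 0) := by
  have hmut := c.hmut i hi i.2
  simp only [exchVar, map_mul, map_add, c.hom_Xinv, c.hom_finprod_Xv_pow] at hmut
  rcases finprod_Xv_pow_add_finprod_Xv_pow_eq
      (mul_right_cancel₀ (right_ne_zero_of_mul_eq_one (Xv_mul_Xinv _)) hmut) with
    ⟨hpos, hneg⟩ | ⟨hpos, hneg⟩
  · obtain ⟨himage, hoff⟩ := eq_of_extend_toNat_eq c.supportMap_injective hpos hneg
    exact Or.inl ⟨fun j => by simpa using himage j, hoff⟩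
  · obtain ⟨himage, hoff⟩ := eq_of_extend_toNat_eq (b := fun j' => -t'.B j' (c.supportMap i))
      c.supportMap_injective hpos (by simpa only [neg_neg] using hneg)
    have himage' (j : c.Support) : t'.B (c.supportMap j) (c.supportMap i) = -t.B j i := by
      rw [← himage j, neg_neg]
    refine Or.inr ⟨⟨fun j => by simp [himage'], fun j' hj' => by simpa using hoff j' hj'⟩,
      fun j hj => ?_⟩
    have hsign := c.hsign j hj i hi j.2 i.2
    rw [himage'] at hsign
    nlinarith

lemma seedCompatible_initial [Finite I] [Finite I'] :
    SeedCompatible c.hom (evalOne I') {i : c.Support | (i : I) ∈ t.uf} c.supportMap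
      (fun i j => t.B i j, fun i => xGen I i) (t'.B, xGen I') where
  matrix := ⟨fun i hi j hj => t.skew i hi j hj, fun i hi => c.column_compatible hi⟩
  var j := ⟨Xv j, 1, by simp [c.hom_Xv, evalOne_Xv], by simp, by simp [xGen],
    by simp [xGen, c.hom_Xv]⟩

end ClusterMorphism

/-- Let `φ : L(t) → L(t')` be a cluster morphism with
`F = {i ∈ I : φ(x_i) = 1}`, and let `A_φ` be the cluster algebra with initial seed
`({x_i}_{i ∈ I∖F}, I_uf∖F, B restricted to (I∖F) × (I_uf∖F))` (inside `Frac L(t)`).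
Then `φ` maps every cluster monomial of `A_φ` to a cluster monomial of `A_{t'}`:
any cluster monomial `m` of `A_φ` has a representation `a / b` with `φ(b) ≠ 0`, and
`φ(a) / φ(b)` is a cluster monomial of `A_{t'}`. -/
theorem statement6 {I I' : Type*} [Finite I] [Finite I'] (t : Seed I) (t' : Seed I')
    (c : ClusterMorphism t t') (m : LField I)
    (hm : IsClusterMonomial (K := LField I)
        {i : {i : I // c.hom (Xv i) ≠ 1} | (i : I) ∈ t.uf}
        (fun i j => t.B i j) (fun i => xGen I i) m) :
    ∃ a b : LaurentRing I, b ≠ 0 ∧ c.hom b ≠ 0 ∧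
      m = algebraMap (LaurentRing I) (LField I) a /
            algebraMap (LaurentRing I) (LField I) b ∧
      IsClusterMonomial t'.uf t'.B (xGen I')
        (algebraMap (LaurentRing I') (LField I') (c.hom a) /
          algebraMap (LaurentRing I') (LField I') (c.hom b)) := by
  obtain ⟨l, hl, n, rfl⟩ := hm
  have hcompat := c.seedCompatible_initial.mutSeq c.supportMap_injective hl
  obtain ⟨a, b, -, hb, hm, hv⟩ := FracImage.finprod fun j => (hcompat.var j).pow (n j)
  refine ⟨a, b, ne_zero_of_map (ne_zero_of_map hb.ne'), ne_zero_of_map hb.ne', hm,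
    l.map c.supportMap, ?_, extend c.supportMap n 0, ?_⟩
  · simp only [List.mem_map]
    rintro _ ⟨k, hk, rfl⟩
    exact c.huf k (hl k hk) k.2
  · rw [← hv, finprod_pow_extend c.supportMap_injective]

end
end

section
/- Let φ: L(t) → L(t') be a cluster morphism between seeds t = ({x_i}_{i∈I}, I_uf, B) and t' = ({y_j}_{j∈I'}, I'_uf, B'), and let F = {i ∈ I : φ(x_i) = 1}. Then the kernel of φ is the ideal of the Laurent polynomial ring L(t) generated by the elements x_i − 1 for i ∈ F. -/
open scoped BigOperators

noncomputable section

/-!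
A cluster morphism `φ` sends each `x_i` to `1` (for `i ∈ F`) or to `y_{v i}`, so it factors as
the substitution `x_i ↦ 1` for `i ∈ F`, followed by the monomial renaming `x_i ↦ y_{v i}`.
The renaming is injective on Laurent polynomials in the variables off `F`, because `v` is
injective there; hence `ker φ` is the kernel of the substitution. The substitution is the
identity modulo the ideal `J` generated by the `x_i - 1`, `i ∈ F`, and kills `J`, so its kernel
is `J`.
-/

namespace LaurentRing

open AddMonoidAlgebra

variable {I I' : Type*}

theorem Xv_mul_Xinv (i : I) : Xv i * Xinv i = 1 := by
  rw [Xv, Xinv, single_mul_single, ← Finsupp.single_add, add_neg_cancel, Finsupp.single_zero,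
    mul_one, one_def]

theorem Xinv_mul_Xv (i : I) : Xinv i * Xv i = 1 := by
  rw [Xv, Xinv, single_mul_single, ← Finsupp.single_add, neg_add_cancel, Finsupp.single_zero,
    mul_one, one_def]

theorem ringHom_ext {S : Type*} [Semiring S] {f g : LaurentRing I →+* S}
    (h : ∀ i, f (Xv i) = g (Xv i)) : f = g := by
  have hinv : ∀ i, f (Xinv i) = g (Xinv i) := fun i =>
    calc f (Xinv i) = f (Xinv i) * g (Xv i * Xinv i) := by rw [Xv_mul_Xinv, map_one, mul_one]
      _ = f (Xinv i * Xv i) * g (Xinv i) := by rw [map_mul, map_mul, h, mul_assoc]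
      _ = g (Xinv i) := by rw [Xinv_mul_Xv, map_one, one_mul]
  refine AddMonoidAlgebra.ringHom_ext (fun r => ?_) (fun m => ?_)
  · exact RingHom.congr_fun (Subsingleton.elim (f.comp singleZeroRingHom)
      (g.comp singleZeroRingHom)) r
  induction m using Finsupp.induction_linear with
  | zero => rw [← one_def, map_one, map_one]
  | add a b ha hb => rw [← mul_one (1 : ℚ), ← single_mul_single, map_mul, map_mul, ha, hb]
  | single i n =>
    induction n using Int.induction_on with
    | zero => rw [Finsupp.single_zero, ← one_def, map_one, map_one]
    | succ n ih =>
      rw [Finsupp.single_add, ← mul_one (1 : ℚ), ← single_mul_single, map_mul, map_mul, ih,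
        ← Xv, h]
    | pred n ih =>
      rw [sub_eq_add_neg, Finsupp.single_add, ← mul_one (1 : ℚ), ← single_mul_single, map_mul,
        map_mul, ih, ← Xinv, hinv]

open Classical in
/-- Substitutes `x_i = 1` for `i ∈ s`, by deleting those coordinates of every exponent. -/
def specializeOne (s : Set I) : LaurentRing I →+* LaurentRing I :=
  mapDomainRingHom ℚ (Finsupp.filterAddHom (· ∉ s))

def rename (v : I → I') : LaurentRing I →+* LaurentRing I' :=
  mapDomainRingHom ℚ (Finsupp.mapDomain.addMonoidHom v)

theorem specializeOne_Xv_of_mem {s : Set I} {i : I} (hi : i ∈ s) :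
    specializeOne s (Xv i) = 1 := by
  classical
  rw [specializeOne, mapDomainRingHom_apply, Xv, mapDomain_single, one_def]
  exact congrArg (single · 1) (Finsupp.filter_single_of_neg _ (not_not_intro hi))

theorem specializeOne_Xv_of_notMem {s : Set I} {i : I} (hi : i ∉ s) :
    specializeOne s (Xv i) = Xv i := by
  classical
  rw [specializeOne, mapDomainRingHom_apply, Xv, mapDomain_single]
  exact congrArg (single · 1) (Finsupp.filter_single_of_pos _ hi)

theorem rename_Xv (v : I → I') (i : I) : rename v (Xv i) = Xv (v i) := by
  rw [rename, mapDomainRingHom_apply, Xv, mapDomain_single, Finsupp.mapDomain.addMonoidHom_apply,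
    Finsupp.mapDomain_single, Xv]

theorem support_subset_compl_of_mem_specializeOne {s : Set I} {q : LaurentRing I}
    {m : I →₀ ℤ} (hm : m ∈ (specializeOne s q).coeff.support) : ↑m.support ⊆ sᶜ := by
  classical
  obtain ⟨m', -, rfl⟩ := Finset.mem_image.mp (Finsupp.mapDomain_support (s := q.coeff) hm)
  intro i hi
  exact (Finset.mem_filter.mp hi).2

theorem rename_injOn {v : I → I'} {t : Set I} (hv : Set.InjOn v t) :
    Set.InjOn (rename v) {q | ∀ m ∈ q.coeff.support, ↑m.support ⊆ t} := fun _ hq _ hq' h =>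
  coeff_injective <| Finsupp.mapDomain_injOn _ (Finsupp.mapDomain_injOn t hv) hq hq'
    (congrArg coeff h)

theorem mk_specializeOne (s : Set I) (q : LaurentRing I) :
    Ideal.Quotient.mk (Ideal.span ((fun i => Xv i - 1) '' s)) (specializeOne s q) =
      Ideal.Quotient.mk (Ideal.span ((fun i => Xv i - 1) '' s)) q := by
  set J := Ideal.span ((fun i => Xv i - 1) '' s)
  refine RingHom.congr_fun (ringHom_ext (f := (Ideal.Quotient.mk J).comp (specializeOne s))
    (g := Ideal.Quotient.mk J) fun i => ?_) q
  by_cases hi : i ∈ s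
  · rw [RingHom.comp_apply, specializeOne_Xv_of_mem hi, eq_comm, Ideal.Quotient.eq]
    exact Ideal.subset_span ⟨i, hi, rfl⟩
  · rw [RingHom.comp_apply, specializeOne_Xv_of_notMem hi]

theorem ker_rename_comp_specializeOne {v : I → I'} {s : Set I} (hv : Set.InjOn v sᶜ) :
    RingHom.ker ((rename v).comp (specializeOne s)) = Ideal.span ((fun i => Xv i - 1) '' s) := by
  refine le_antisymm (fun q hq => ?_) (Ideal.span_le.mpr ?_)
  · have hq0 : specializeOne s q = 0 :=
      rename_injOn hv (fun _ => support_subset_compl_of_mem_specializeOne) (by simp)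
        ((RingHom.mem_ker.mp hq).trans (map_zero _).symm)
    rw [← Ideal.Quotient.eq_zero_iff_mem, ← mk_specializeOne, hq0, map_zero]
  · rintro _ ⟨i, hi, rfl⟩
    rw [SetLike.mem_coe, RingHom.mem_ker, map_sub, map_one, RingHom.comp_apply,
      specializeOne_Xv_of_mem hi, map_one, sub_self]

end LaurentRing

open LaurentRing

theorem statement7_general {I I' : Type*} (t : Seed I) (t' : Seed I')
    (c : ClusterMorphism t t') :
    RingHom.ker c.hom = Ideal.span ((fun i => Xv i - 1) '' {i : I | c.hom (Xv i) = 1}) := by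
  have hfactor : c.hom = (rename c.vmap).comp (specializeOne {i | c.hom (Xv i) = 1}) :=
    ringHom_ext fun i => by
      rw [RingHom.comp_apply]
      by_cases hi : c.hom (Xv i) = 1
      · rw [hi, specializeOne_Xv_of_mem (s := {i | c.hom (Xv i) = 1}) hi, map_one]
      · rw [(c.hx i).resolve_left hi, specializeOne_Xv_of_notMem (s := {i | c.hom (Xv i) = 1}) hi,
          rename_Xv]
  exact (congrArg RingHom.ker hfactor).trans
    (ker_rename_comp_specializeOne fun i hi j hj => c.vinj i j hi hj)

/-- The kernel of a cluster morphism `φ : L(t) → L(t')` is the ideal of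
the Laurent polynomial ring `L(t)` generated by the elements `x_i - 1` for
`i ∈ F = {i ∈ I : φ(x_i) = 1}`. -/
theorem statement7 {I I' : Type*} [Finite I] [Finite I'] (t : Seed I) (t' : Seed I')
    (c : ClusterMorphism t t') :
    RingHom.ker c.hom = Ideal.span ((fun i => Xv i - 1) '' {i : I | c.hom (Xv i) = 1}) :=
  statement7_general t t' c

end
end

section
/- Every bijective cluster morphism φ: L(t) → L(t') between seeds t = ({x_i}_{i∈I}, I_uf, B) and t' = ({y_j}_{j∈I'}, I'_uf, B') decomposes as φ = 𝔉_E ∘ 𝔖_σ, the composite of a similarity morphism 𝔖_σ (for the bijection σ: I → I' induced by φ) followed by a freezing morphism 𝔉_E (for E = I'_uf ∖ φ(I_uf)); equivalently, every bijective cluster morphism is a composition of a similarity and a freezing. -/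
/-!
An injective cluster morphism cannot send any `x_i` to `1`, so it sends every `x_i` to `y_{σ i}`.
A ring map out of a Laurent ring is determined by the images of the `x_i`, since the monomials
form the free abelian group on the `x_i` and ring maps out of `ℚ` are unique; hence `φ` is the
reindexing `x_i ↦ y_{σ i}`, and freezing is the identity on Laurent rings. A variable `y_j` with
`j` outside the image of `σ` is not in the image of the reindexing, so surjectivity of `φ` makes
`σ` surjective.
-/

open scoped BigOperators

noncomputable section

/-- The ring homomorphism between Laurent rings induced by a map of the variable
index sets, `x_i ↦ x_{f i}`. -/
def reindexHom {I I' : Type*} (f : I → I') : LaurentRing I →+* LaurentRing I' :=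
  AddMonoidAlgebra.mapDomainRingHom ℚ (Finsupp.mapDomain.addMonoidHom f)

/-- The deleting morphism `Del_F`: the ring homomorphism with `x_i ↦ 1` for `i ∈ F` and
`x_j ↦ x_j` for `j ∉ F`. -/
def DelHom {I : Type*} (F : Set I) : LaurentRing I →+* LaurentRing {i : I // i ∉ F} :=
  AddMonoidAlgebra.mapDomainRingHom ℚ
    (AddMonoidHom.mk' (Finsupp.subtypeDomain (fun i => i ∉ F))
      (fun _ _ => Finsupp.subtypeDomain_add))

/-- The similarity morphism `𝔖_σ`: the ring homomorphism with `x_i ↦ y_{σ i}`. -/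
def SimHom {I I' : Type*} (σ : I → I') : LaurentRing I →+* LaurentRing I' :=
  reindexHom σ

/-- The freezing morphism `𝔉_E` attached to a set `E` of unfrozen vertices: on the level
of the Laurent polynomial rings it is the identity ring map (only the seed data changes). -/
def FreezeHom {I : Type*} {γ : Type*} (_E : Set γ) : LaurentRing I →+* LaurentRing I :=
  RingHom.id _

/-- The adding-vertices morphism `𝔈_H`, attached to the complement `s = I' ∖ H` of the
added vertex set: the inclusion `y_j ↦ y_j` of the Laurent polynomial ring on the
variables indexed by `s`. -/
def IncHom {I' : Type*} (s : Set I') : LaurentRing ↥s →+* LaurentRing I' :=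
  reindexHom (Subtype.val : ↥s → I')


section

variable {I I' : Type*}

lemma Xv_ne_one (i : I) : Xv i ≠ (1 : LaurentRing I) := by
  rw [Xv, AddMonoidAlgebra.one_def]
  exact fun h => Finsupp.single_ne_zero.2 one_ne_zero
    (AddMonoidAlgebra.single_left_injective one_ne_zero h)

lemma reindexHom_Xv (f : I → I') (i : I) : reindexHom f (Xv i) = Xv (f i) := by
  simp [reindexHom, Xv]

theorem LaurentRing.ringHom_ext_s12 {R : Type*} [Semiring R] {ψ₁ ψ₂ : LaurentRing I →+* R}
    (h : ∀ i, ψ₁ (Xv i) = ψ₂ (Xv i)) : ψ₁ = ψ₂ := by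
  refine AddMonoidAlgebra.ringHom_ext' (Subsingleton.elim _ _) ?_
  refine Multiplicative.monoidHom_ext _ _ ?_
  exact Finsupp.addHom_ext' fun i => AddMonoidHom.ext_int (h i)

theorem surjective_of_reindexHom_surjective {f : I → I'}
    (hf : Function.Surjective (reindexHom f)) : Function.Surjective f := by
  intro j
  by_contra hj
  obtain ⟨p, hp⟩ := hf (Xv j)
  have hnotin : Finsupp.single j 1 ∉ Set.range (Finsupp.mapDomain f : (I →₀ ℤ) → (I' →₀ ℤ)) := by
    rintro ⟨m, hm⟩
    simpa [hm] using Finsupp.mapDomain_of_notMem_range m j hj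
  have hcoeff := congrArg (fun q : LaurentRing I' => q.coeff (Finsupp.single j 1)) hp
  simp only [reindexHom, Xv, AddMonoidAlgebra.mapDomainRingHom_apply,
    AddMonoidAlgebra.coeff_single, Finsupp.single_eq_same] at hcoeff
  exact one_ne_zero (hcoeff.symm.trans (Finsupp.mapDomain_of_notMem_range _ _ hnotin))

namespace ClusterMorphism

variable {t : Seed I} {t' : Seed I'} (c : ClusterMorphism t t')

theorem hom_Xv_of_injective (hinj : Function.Injective c.hom) (i : I) :
    c.hom (Xv i) = Xv (c.vmap i) :=
  (c.hx i).resolve_left fun h => Xv_ne_one i (hinj (h.trans (map_one c.hom).symm))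

theorem vmap_injective_of_injective (hinj : Function.Injective c.hom) :
    Function.Injective c.vmap := by
  have hne (i : I) : c.hom (Xv i) ≠ 1 := by
    rw [c.hom_Xv_of_injective hinj]; exact Xv_ne_one _
  exact fun i j h => c.vinj i j (hne i) (hne j) h

theorem hom_eq_reindexHom_of_injective (hinj : Function.Injective c.hom) :
    c.hom = reindexHom c.vmap :=
  LaurentRing.ringHom_ext_s12 fun i => by rw [c.hom_Xv_of_injective hinj, reindexHom_Xv]

end ClusterMorphism

end

theorem statement12_general {I I' : Type*} (t : Seed I) (t' : Seed I')
    (c : ClusterMorphism t t') (hbij : Function.Bijective c.hom) :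
    Function.Bijective c.vmap ∧
      c.hom = (FreezeHom (I := I') (t'.uf \ c.vmap '' t.uf)).comp (SimHom c.vmap) := by
  have hsim := c.hom_eq_reindexHom_of_injective hbij.injective
  refine ⟨⟨c.vmap_injective_of_injective hbij.injective, ?_⟩, hsim⟩
  exact surjective_of_reindexHom_surjective (hsim ▸ hbij.surjective)

/-- Every bijective cluster morphism `φ : L(t) → L(t')` decomposes as
`φ = 𝔉_E ∘ 𝔖_σ`: the induced vertex map `σ` is a bijection `I → I'` and `φ` is the
composite of the similarity morphism `𝔖_σ` followed by the freezing morphism `𝔉_E`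
for `E = I'_uf ∖ φ(I_uf)`. -/
theorem statement12 {I I' : Type*} [Finite I] [Finite I'] (t : Seed I) (t' : Seed I')
    (c : ClusterMorphism t t') (hbij : Function.Bijective c.hom) :
    Function.Bijective c.vmap ∧
      c.hom = (FreezeHom (I := I') (t'.uf \ c.vmap '' t.uf)).comp (SimHom c.vmap) :=
  statement12_general t t' c hbij

end
end
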